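/- arXiv:0704.2801 — 4 statements merged into one kernel-verified Lean document; each statement's English description precedes it below -/
import Mathlib

section
/- Let Y be a topological space, k ≥ 1, and let A₁, A₂ be open subsets of Y × ℝ^k with q₁(A₁) ⊆ q₁(A₂). A continuous fiber-preserving map f : A₁ → A₂ is C^{0,∞} if and only if it is C^∞-continuous, i.e. for every a ∈ A₁ and every open product set U₂ × V₂ ⊆ A₂ containing f(a), there exists an open product set U₁ × V₁ ⊆ A₁ containing a such that f(U₁ × V₁) ⊆ U₂ × V₂ and the map y ↦ f^y|_{V₁} is continuous from U₁ into C^∞(V₁, V₂). -/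
open Set Topology

variable {Y : Type*} [TopologicalSpace Y]

/-- Continuity of `y ↦ f y` from `U` into `C^∞(V₁, V₂)` (with the topology of uniform
convergence of all iterated derivatives on compact subsets of `V₁`), together with the
requirement that each `f y` (`y ∈ U`) is a smooth map from `V₁` into `V₂`. -/
def SmoothConvOn {E F : Type*} [NormedAddCommGroup E] [NormedSpace ℝ E]
    [NormedAddCommGroup F] [NormedSpace ℝ F]
    (U : Set Y) (V₁ : Set E) (V₂ : Set F) (f : Y → E → F) : Prop :=
  (∀ y ∈ U, ContDiffOn ℝ (⊤ : ℕ∞) (f y) V₁ ∧ MapsTo (f y) V₁ V₂) ∧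
  ∀ y₀ ∈ U, ∀ K ⊆ V₁, IsCompact K → ∀ n : ℕ, ∀ ε > 0,
    ∀ᶠ y in 𝓝[U] y₀, ∀ x ∈ K,
      ‖iteratedFDerivWithin ℝ n (f y) V₁ x - iteratedFDerivWithin ℝ n (f y₀) V₁ x‖ < ε

/-- `f` is a `C^{0,∞}` map from `A₁` to `A₂`: it is continuous, fiber preserving, maps `A₁`
into `A₂`, and whenever open product sets `U₁ ×ˢ V₁ ⊆ A₁`, `U₂ ×ˢ V₂ ⊆ A₂` satisfy
`f (U₁ ×ˢ V₁) ⊆ U₂ ×ˢ V₂`, the map `y ↦ f^y|_{V₁}` is continuous from `U₁` into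
`C^∞(V₁, V₂)`. -/
def IsC0Smooth {E F : Type*} [NormedAddCommGroup E] [NormedSpace ℝ E]
    [NormedAddCommGroup F] [NormedSpace ℝ F]
    (A₁ : Set (Y × E)) (A₂ : Set (Y × F)) (f : Y × E → Y × F) : Prop :=
  ContinuousOn f A₁ ∧ MapsTo f A₁ A₂ ∧ (∀ p ∈ A₁, (f p).1 = p.1) ∧
  ∀ (U₁ U₂ : Set Y) (V₁ : Set E) (V₂ : Set F),
    IsOpen U₁ → IsOpen U₂ → IsOpen V₁ → IsOpen V₂ →
    U₁ ×ˢ V₁ ⊆ A₁ → U₂ ×ˢ V₂ ⊆ A₂ → MapsTo f (U₁ ×ˢ V₁) (U₂ ×ˢ V₂) →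
    SmoothConvOn U₁ V₁ V₂ fun y x => (f (y, x)).2

/-- `f` belongs to `Diff⁰(A₁, A₂)`: it is a `C^{0,∞}` bijection from `A₁` onto `A₂` with a
`C^{0,∞}` inverse. -/
def IsDiff0 {E F : Type*} [NormedAddCommGroup E] [NormedSpace ℝ E]
    [NormedAddCommGroup F] [NormedSpace ℝ F]
    (A₁ : Set (Y × E)) (A₂ : Set (Y × F)) (f : Y × E → Y × F) : Prop :=
  IsC0Smooth A₁ A₂ f ∧ BijOn f A₁ A₂ ∧ ∃ g, InvOn g f A₁ A₂ ∧ IsC0Smooth A₂ A₁ g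

/-- `f` is `C^∞`-continuous: at every point `a ∈ A₁`, for every open product set
`U₂ ×ˢ V₂ ⊆ A₂` containing `f a`, there is an open product set `U₁ ×ˢ V₁ ⊆ A₁` containing
`a`, mapped by `f` into `U₂ ×ˢ V₂`, on which `y ↦ f^y|_{V₁}` is continuous from `U₁` into
`C^∞(V₁, V₂)`. -/
def CInfContinuous {E F : Type*} [NormedAddCommGroup E] [NormedSpace ℝ E]
    [NormedAddCommGroup F] [NormedSpace ℝ F]
    (A₁ : Set (Y × E)) (A₂ : Set (Y × F)) (f : Y × E → Y × F) : Prop :=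
  ∀ a ∈ A₁, ∀ (U₂ : Set Y) (V₂ : Set F), IsOpen U₂ → IsOpen V₂ →
    U₂ ×ˢ V₂ ⊆ A₂ → f a ∈ U₂ ×ˢ V₂ →
    ∃ (U₁ : Set Y) (V₁ : Set E), IsOpen U₁ ∧ IsOpen V₁ ∧ a ∈ U₁ ×ˢ V₁ ∧
      U₁ ×ˢ V₁ ⊆ A₁ ∧ MapsTo f (U₁ ×ˢ V₁) (U₂ ×ˢ V₂) ∧
      SmoothConvOn U₁ V₁ V₂ fun y x => (f (y, x)).2

/-- A continuous fiber-preserving map `f : A₁ → A₂` between open subsets of `Y × ℝ^k`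
(with `q₁(A₁) ⊆ q₁(A₂)`) is `C^{0,∞}` if and only if it is `C^∞`-continuous. -/
theorem isC0Smooth_iff_cInfContinuous (k : ℕ) (hk : 1 ≤ k)
    (A₁ A₂ : Set (Y × (Fin k → ℝ))) (hA₁ : IsOpen A₁) (hA₂ : IsOpen A₂)
    (hq : Prod.fst '' A₁ ⊆ Prod.fst '' A₂)
    (f : Y × (Fin k → ℝ) → Y × (Fin k → ℝ))
    (hfc : ContinuousOn f A₁) (hfm : MapsTo f A₁ A₂)
    (hfp : ∀ p ∈ A₁, (f p).1 = p.1) :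
    IsC0Smooth A₁ A₂ f ↔ CInfContinuous A₁ A₂ f := by

  constructor
  · rintro ⟨hc, hm, hp, h⟩ a ha U₂ V₂ hU₂ hV₂ hsub₂ hfa
    have hca : ContinuousAt f a := hc.continuousAt (hA₁.mem_nhds ha)
    have hO : A₁ ∩ f ⁻¹' (U₂ ×ˢ V₂) ∈ 𝓝 a :=
      Filter.inter_mem (hA₁.mem_nhds ha)
        (hca.preimage_mem_nhds ((hU₂.prod hV₂).mem_nhds hfa))
    obtain ⟨U₁, V₁, hU₁, hy, hV₁, hx, hsub⟩ := mem_nhds_prod_iff'.1 hO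
    exact ⟨U₁, V₁, hU₁, hV₁, ⟨hy, hx⟩, fun p hp' => (hsub hp').1,
      fun p hp' => (hsub hp').2,
      h U₁ U₂ V₁ V₂ hU₁ hU₂ hV₁ hV₂ (fun p hp' => (hsub hp').1) hsub₂
        (fun p hp' => (hsub hp').2)⟩
  · intro h
    refine ⟨hfc, hfm, hfp, ?_⟩
    intro U₁ U₂ V₁ V₂ hU₁ hU₂ hV₁ hV₂ hs₁ hs₂ hmaps
    constructor
    · intro y hy
      refine ⟨?_, fun x hx => (hmaps (show (y, x) ∈ U₁ ×ˢ V₁ from ⟨hy, hx⟩)).2⟩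
      intro x hx
      obtain ⟨U₁', V₁', hU₁', hV₁', ⟨hy', hx'⟩, _, _, hsc⟩ :=
        h (y, x) (hs₁ ⟨hy, hx⟩) U₂ V₂ hU₂ hV₂ hs₂ (hmaps ⟨hy, hx⟩)
      exact ((hsc.1 y hy').1.contDiffAt (hV₁'.mem_nhds hx')).contDiffWithinAt
    · intro y₀ hy₀ K hKV hK n ε hε
      have key : ∀ x ∈ K, ∃ r > 0, Metric.closedBall x r ⊆ V₁ ∧
          ∀ᶠ y in 𝓝 y₀, ∀ z ∈ Metric.closedBall x r,
            ‖iteratedFDerivWithin ℝ n (fun x => (f (y, x)).2) V₁ z -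
              iteratedFDerivWithin ℝ n (fun x => (f (y₀, x)).2) V₁ z‖ < ε := by
        intro x hxK
        obtain ⟨U₁', V₁', hU₁', hV₁', ⟨hy', hx'⟩, _, _, hsc⟩ :=
          h (y₀, x) (hs₁ ⟨hy₀, hKV hxK⟩) U₂ V₂ hU₂ hV₂ hs₂ (hmaps ⟨hy₀, hKV hxK⟩)
        obtain ⟨r, hr, hball⟩ := Metric.nhds_basis_closedBall.mem_iff.1
          ((hV₁'.inter hV₁).mem_nhds ⟨hx', hKV hxK⟩)
        have hev := hsc.2 y₀ hy' (Metric.closedBall x r)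
          (fun z hz => (hball hz).1) (isCompact_closedBall x r) n ε hε
        rw [nhdsWithin_eq_nhds.2 (hU₁'.mem_nhds hy')] at hev
        refine ⟨r, hr, fun z hz => (hball hz).2, hev.mono fun y hy z hz => ?_⟩
        have h1 : ∀ g : (Fin k → ℝ) → (Fin k → ℝ),
            iteratedFDerivWithin ℝ n g V₁' z = iteratedFDerivWithin ℝ n g V₁ z := by
          intro g
          rw [iteratedFDerivWithin_of_isOpen n hV₁' (hball hz).1,
            iteratedFDerivWithin_of_isOpen n hV₁ (hball hz).2]
        rw [← h1, ← h1]
        exact hy z hz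
      choose! r hr hball hev using key
      obtain ⟨t, ht⟩ := hK.elim_finite_subcover_image
        (fun x _ => Metric.isOpen_ball (x := x) (ε := r x))
        (fun x hxK => mem_biUnion hxK (Metric.mem_ball_self (hr x hxK)))
      obtain ⟨htK, htfin, htcov⟩ := ht
      have hall : ∀ᶠ y in 𝓝 y₀, ∀ x ∈ t, ∀ z ∈ Metric.closedBall x (r x),
          ‖iteratedFDerivWithin ℝ n (fun x => (f (y, x)).2) V₁ z -
            iteratedFDerivWithin ℝ n (fun x => (f (y₀, x)).2) V₁ z‖ < ε := by
        rw [Filter.eventually_all_finite htfin]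
        exact fun x hx => hev x (htK hx)
      refine (hall.filter_mono nhdsWithin_le_nhds).mono fun y hy z hzK => ?_
      obtain ⟨x, hx, hzx⟩ := mem_iUnion₂.1 (htcov hzK)
      exact hy x hx z (Metric.ball_subset_closedBall hzx)
end

section
/- Let Y be a locally compact Hausdorff space, k ≥ 1, and A ⊆ Y × ℝ^k open. Let ρ : A → ℝ be continuous and strictly positive, and let h : A → ℂ be continuous with compact support (extended by 0 to Y × ℝ^k). Then the function y ↦ ∫_{A^y} h(y, x) ρ(y, x) dx, where the integral is with respect to Lebesgue measure on ℝ^k over the open set A^y = {x : (y,x) ∈ A}, is continuous on Y and has compact support contained in the projection of the support of h to Y. -/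
open Set Topology MeasureTheory

/-- Let `Y` be a locally compact Hausdorff space, `A ⊆ Y × ℝ^k` open, `ρ : A → ℝ`
continuous and strictly positive, and `h : A → ℂ` continuous with compact support
(extended by `0` to `Y × ℝ^k`).  Then `y ↦ ∫_{A^y} h(y, x) ρ(y, x) dx` (Lebesgue measure
on `ℝ^k` over each open fiber `A^y`) is continuous on `Y` and has compact support
contained in the projection of the support of `h` to `Y`. -/
theorem continuous_fiber_integral {Y : Type*} [TopologicalSpace Y]
    [LocallyCompactSpace Y] [T2Space Y] (k : ℕ) (hk : 1 ≤ k)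
    (A : Set (Y × (Fin k → ℝ))) (hA : IsOpen A)
    (ρ : Y × (Fin k → ℝ) → ℝ) (hρc : ContinuousOn ρ A) (hρpos : ∀ p ∈ A, 0 < ρ p)
    (h : Y × (Fin k → ℝ) → ℂ) (hhc : Continuous h) (hh0 : tsupport h ⊆ A)
    (hhsupp : HasCompactSupport h) :
    Continuous (fun y : Y => ∫ x in {x : Fin k → ℝ | (y, x) ∈ A}, ρ (y, x) • h (y, x)) ∧
    Function.support
        (fun y : Y => ∫ x in {x : Fin k → ℝ | (y, x) ∈ A}, ρ (y, x) • h (y, x)) ⊆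
      Prod.fst '' tsupport h ∧
    HasCompactSupport
      (fun y : Y => ∫ x in {x : Fin k → ℝ | (y, x) ∈ A}, ρ (y, x) • h (y, x)) := by
  classical
  -- The integrand extended by zero to all of `Y × ℝ^k`.
  set g : Y × (Fin k → ℝ) → ℂ := fun p => if p ∈ A then ρ p • h p else 0 with hg_def
  have hg_eq_zero : ∀ p, p ∉ tsupport h → g p = 0 := by
    intro p hp
    have hh : h p = 0 := image_eq_zero_of_notMem_tsupport hp
    by_cases hpA : p ∈ A <;> simp [hg_def, hpA, hh]
  have hg_supp : Function.support g ⊆ tsupport h := by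
    intro p hp
    by_contra hpn
    exact hp (hg_eq_zero p hpn)
  -- `g` is continuous.
  have hgc : Continuous g := by
    rw [continuous_iff_continuousAt]
    intro p
    by_cases hp : p ∈ A
    · have : ∀ᶠ q in nhds p, g q = ρ q • h q := by
        filter_upwards [hA.mem_nhds hp] with q hq
        simp [hg_def, hq]
      have hcont : ContinuousAt (fun q => ρ q • h q) p :=
        ((hρc.continuousAt (hA.mem_nhds hp)).smul hhc.continuousAt)
      exact hcont.congr (Filter.eventuallyEq_of_mem (hA.mem_nhds hp)
        (fun q hq => by simp [hg_def, hq])).symm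
    · have hpn : p ∉ tsupport h := fun hmem => hp (hh0 hmem)
      have hnhds : (tsupport h)ᶜ ∈ nhds p :=
        (isClosed_tsupport h).isOpen_compl.mem_nhds hpn
      have : ∀ᶠ q in nhds p, g q = 0 := by
        filter_upwards [hnhds] with q hq using hg_eq_zero q hq
      exact (continuousAt_const (y := (0 : ℂ))).congr
        (this.mono fun q hq => hq.symm)
  have hgsupp : HasCompactSupport g :=
    HasCompactSupport.of_support_subset_isCompact hhsupp hg_supp
  -- The compact set of fibers.
  set K : Set (Fin k → ℝ) := Prod.snd '' tsupport g with hK_def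
  have hKc : IsCompact K := hgsupp.image continuous_snd
  have hKm : MeasurableSet K := hKc.isClosed.measurableSet
  have hKfin : volume K < ⊤ := hKc.measure_lt_top
  have hg_zero_off : ∀ y x, x ∉ K → g (y, x) = 0 := by
    intro y x hx
    by_contra hne
    exact hx ⟨(y, x), subset_tsupport g hne, rfl⟩
  -- Rewrite the fiber integral.
  have key : ∀ y : Y,
      (∫ x in {x : Fin k → ℝ | (y, x) ∈ A}, ρ (y, x) • h (y, x)) = ∫ x in K, g (y, x) := by
    intro y
    have hsm : MeasurableSet {x : Fin k → ℝ | (y, x) ∈ A} :=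
      (hA.preimage (Continuous.prodMk_right y)).measurableSet
    have h1 : (∫ x in {x : Fin k → ℝ | (y, x) ∈ A}, ρ (y, x) • h (y, x))
        = ∫ x in {x : Fin k → ℝ | (y, x) ∈ A}, g (y, x) := by
      refine setIntegral_congr_fun hsm fun x hx => ?_
      exact (if_pos hx).symm
    have h2 : (∫ x in {x : Fin k → ℝ | (y, x) ∈ A}, g (y, x)) = ∫ x, g (y, x) := by
      refine setIntegral_eq_integral_of_forall_compl_eq_zero fun x hx => ?_
      exact if_neg hx
    have h3 : (∫ x, g (y, x)) = ∫ x in K, g (y, x) :=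
      (setIntegral_eq_integral_of_forall_compl_eq_zero fun x hx =>
        hg_zero_off y x hx).symm
    rw [h1, h2, h3]
  have keyfun : (fun y : Y => ∫ x in {x : Fin k → ℝ | (y, x) ∈ A}, ρ (y, x) • h (y, x))
      = fun y : Y => ∫ x in K, g (y, x) := funext key
  rw [keyfun]
  -- Continuity.
  have hcont : Continuous fun y : Y => ∫ x in K, g (y, x) := by
    rw [continuous_iff_continuousAt]
    intro y₀
    have : CompactSpace K := isCompact_iff_compactSpace.mp hKc
    set G : Y → C(K, ℂ) := fun y =>
      ⟨fun x => g (y, (x : Fin k → ℝ)),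
        (hgc.comp (Continuous.prodMk_right y)).comp continuous_subtype_val⟩ with hG_def
    have hGc : Continuous G := by
      refine ContinuousMap.continuous_of_continuous_uncurry G ?_
      exact hgc.comp (continuous_fst.prodMk (continuous_subtype_val.comp continuous_snd))
    rw [ContinuousAt, Metric.tendsto_nhds]
    intro ε hε
    set m : ℝ := (volume K).toReal with hm_def
    have hm0 : 0 ≤ m := ENNReal.toReal_nonneg
    have hG : ∀ᶠ y in nhds y₀, dist (G y) (G y₀) < ε / (2 * (m + 1)) :=
      Metric.tendsto_nhds.1 (hGc.continuousAt (x := y₀)) _ (by positivity)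
    filter_upwards [hG] with y hGy
    have hy : ∀ x ∈ K, dist (g (y₀, x)) (g (y, x)) < ε / (2 * (m + 1)) := by
      intro x hx
      calc dist (g (y₀, x)) (g (y, x)) = dist (G y ⟨x, hx⟩) (G y₀ ⟨x, hx⟩) := by
            rw [dist_comm]; rfl
        _ ≤ dist (G y) (G y₀) := ContinuousMap.dist_apply_le_dist _
        _ < ε / (2 * (m + 1)) := hGy
    have hint : ∀ z : Y, IntegrableOn (fun x => g (z, x)) K volume := fun z =>
      (hgc.comp (Continuous.prodMk_right z)).continuousOn.integrableOn_compact hKc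
    have hdiff : (∫ x in K, g (y, x)) - ∫ x in K, g (y₀, x)
        = ∫ x in K, (g (y, x) - g (y₀, x)) := (integral_sub (hint y) (hint y₀)).symm
    rw [dist_eq_norm, hdiff]
    have hbound : ‖∫ x in K, (g (y, x) - g (y₀, x))‖ ≤ (ε / (2 * (m + 1))) * m := by
      refine norm_setIntegral_le_of_norm_le_const hKfin fun x hx => ?_
      have := hy x hx
      rw [dist_comm, dist_eq_norm] at this
      exact this.le
    calc ‖∫ x in K, (g (y, x) - g (y₀, x))‖ ≤ (ε / (2 * (m + 1))) * m := hbound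
      _ < ε := by
          rw [div_mul_eq_mul_div, div_lt_iff₀ (by linarith)]
          nlinarith
  refine ⟨hcont, ?_, ?_⟩
  · -- support
    intro y hy
    rw [Function.mem_support] at hy
    by_contra hyn
    apply hy
    have : ∀ x, g (y, x) = 0 := by
      intro x
      by_contra hne
      have hmem : (y, x) ∈ tsupport h := hg_supp hne
      exact hyn ⟨(y, x), hmem, rfl⟩
    simp [this]
  · -- compact support
    have himg : IsCompact (Prod.fst '' tsupport h) := hhsupp.image continuous_fst
    refine IsCompact.of_isClosed_subset himg (isClosed_tsupport _) ?_
    refine closure_minimal ?_ himg.isClosed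
    intro y hy
    rw [Function.mem_support] at hy
    by_contra hyn
    apply hy
    have : ∀ x, g (y, x) = 0 := by
      intro x
      by_contra hne
      exact hyn ⟨(y, x), hg_supp hne, rfl⟩
    simp [this]
end

section
/- Let Y be a locally compact Hausdorff space, k ≥ 1, and A ⊆ Y × ℝ^k open. Then the compactly supported C^{0,∞} functions on A separate the points of A; moreover, for every point a ∈ A there exists a compactly supported C^{0,∞} function f : A → ℂ with f(a) = 1. -/
open Set Topology

variable {Y : Type*} [TopologicalSpace Y]

/-- `f` belongs to `C^{0,∞}(A)`: `f : A → ℂ` is continuous, each fiber map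
`f^y = f(y, ·)` is smooth on `A^y`, and for every open product set `U ×ˢ V ⊆ A` the map
`y ↦ f^y|_V` is continuous from `U` into `C^∞(V, ℂ)`. -/
def MemC0SmoothFun {E : Type*} [NormedAddCommGroup E] [NormedSpace ℝ E]
    (A : Set (Y × E)) (f : Y × E → ℂ) : Prop :=
  ContinuousOn f A ∧ (∀ y : Y, ContDiffOn ℝ (⊤ : ℕ∞) (fun x => f (y, x)) {x | (y, x) ∈ A}) ∧
  ∀ (U : Set Y) (V : Set E), IsOpen U → IsOpen V → U ×ˢ V ⊆ A →
    SmoothConvOn U V (univ : Set ℂ) fun y x => f (y, x)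

/-- `f` belongs to `C_c^{0,∞}(A)`: `f ∈ C^{0,∞}(A)` and `f` vanishes on `A` outside a
compact subset of `A`. -/
def MemCcC0SmoothFun {E : Type*} [NormedAddCommGroup E] [NormedSpace ℝ E]
    (A : Set (Y × E)) (f : Y × E → ℂ) : Prop :=
  MemC0SmoothFun A f ∧ ∃ K, IsCompact K ∧ K ⊆ A ∧ ∀ p ∈ A, p ∉ K → f p = 0

/-- A product of a continuous function of `y` and a smooth function of `x` is `C^{0,∞}`. -/
theorem memC0SmoothFun_mul {E : Type*} [NormedAddCommGroup E] [NormedSpace ℝ E]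
    (A : Set (Y × E)) (φ : Y → ℝ) (hφ : Continuous φ)
    (ψ : E → ℂ) (hψ : ContDiff ℝ (⊤ : ℕ∞) ψ) :
    MemC0SmoothFun A (fun p => (φ p.1 : ℂ) * ψ p.2) := by
  have hc : Continuous fun p : Y × E => (φ p.1 : ℂ) * ψ p.2 :=
    ((Complex.continuous_ofReal.comp hφ).comp continuous_fst).mul
      (hψ.continuous.comp continuous_snd)
  have hfib : ∀ (y : Y) (s : Set E), ContDiffOn ℝ (⊤ : ℕ∞) (fun x => (φ y : ℂ) * ψ x) s :=
    fun y s => (contDiff_const.mul hψ).contDiffOn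
  refine ⟨hc.continuousOn, fun y => hfib y _, ?_⟩
  intro U V hU hV hUV
  refine ⟨fun y _ => ⟨hfib y V, mapsTo_univ _ _⟩, ?_⟩
  intro y₀ hy₀ K hKV hK n ε hε
  have hud : UniqueDiffOn ℝ V := hV.uniqueDiffOn
  have hψn : ContDiffOn ℝ n ψ V := (hψ.of_le (by exact_mod_cast le_top)).contDiffOn
  have hcont : ContinuousOn (iteratedFDerivWithin ℝ n ψ V) V :=
    hψ.contDiffOn.continuousOn_iteratedFDerivWithin (by exact_mod_cast le_top) hud
  obtain ⟨M, hM⟩ := hK.exists_bound_of_continuousOn (hcont.mono hKV)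
  set M' : ℝ := max M 0 + 1 with hM'def
  have hM' : 0 < M' := by positivity
  have key : ∀ y, ∀ x ∈ V, iteratedFDerivWithin ℝ n (fun x => (φ y : ℂ) * ψ x) V x
      = (φ y : ℂ) • iteratedFDerivWithin ℝ n ψ V x := by
    intro y x hx
    have : (fun x => (φ y : ℂ) * ψ x) = (φ y : ℂ) • ψ := by
      funext z; simp [Pi.smul_apply, smul_eq_mul]
    rw [this, iteratedFDerivWithin_const_smul_apply (hψn x hx) hud hx]
  have hcg : ContinuousAt (fun y => (φ y : ℂ)) y₀ :=
    (Complex.continuous_ofReal.comp hφ).continuousAt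
  have hev : ∀ᶠ y in 𝓝[U] y₀, ‖(φ y : ℂ) - (φ y₀ : ℂ)‖ < ε / M' := by
    have : ∀ᶠ y in 𝓝 y₀, ‖(φ y : ℂ) - (φ y₀ : ℂ)‖ < ε / M' := by
      have := hcg.tendsto.eventually (Metric.ball_mem_nhds ((φ y₀ : ℂ)) (div_pos hε hM'))
      filter_upwards [this] with y hy
      rwa [dist_eq_norm] at hy
    exact this.filter_mono nhdsWithin_le_nhds
  filter_upwards [hev] with y hy x hxK
  have hxV : x ∈ V := hKV hxK
  rw [key y x hxV, key y₀ x hxV, ← sub_smul, norm_smul]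
  have h1 : ‖iteratedFDerivWithin ℝ n ψ V x‖ ≤ M' := by
    have := hM x hxK
    calc ‖iteratedFDerivWithin ℝ n ψ V x‖ ≤ M := this
    _ ≤ max M 0 := le_max_left _ _
    _ ≤ M' := by linarith
  calc ‖(φ y : ℂ) - (φ y₀ : ℂ)‖ * ‖iteratedFDerivWithin ℝ n ψ V x‖
      ≤ ‖(φ y : ℂ) - (φ y₀ : ℂ)‖ * M' :=
        mul_le_mul_of_nonneg_left h1 (norm_nonneg _)
    _ < (ε / M') * M' := mul_lt_mul_of_pos_right hy hM'
    _ = ε := div_mul_cancel₀ ε hM'.ne'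

/-- Main construction: a compactly supported `C^{0,∞}` function equal to `1` at a given
point and vanishing outside a prescribed product neighborhood. -/
theorem exists_memCcC0SmoothFun [LocallyCompactSpace Y] [T2Space Y] {k : ℕ}
    (A : Set (Y × (Fin k → ℝ))) (a₁ : Y) (a₂ : Fin k → ℝ)
    (U0 : Set Y) (hU0 : IsOpen U0) (ha₁ : a₁ ∈ U0) (ε : ℝ) (hε : 0 < ε)
    (hsub : U0 ×ˢ Metric.ball a₂ ε ⊆ A) :
    ∃ f : Y × (Fin k → ℝ) → ℂ, MemCcC0SmoothFun A f ∧ f (a₁, a₂) = 1 ∧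
      ∀ p : Y × (Fin k → ℝ), p.1 ∉ U0 ∨ p.2 ∉ Metric.ball a₂ (ε/2) → f p = 0 := by
  obtain ⟨C, hCcomp, hCcl, haC, hCU⟩ :=
    exists_compact_closed_between (isCompact_singleton (x := a₁)) hU0
      (singleton_subset_iff.mpr ha₁)
  obtain ⟨φ, hφ1, hφ0, hφsupp, hφ01⟩ :=
    exists_continuous_one_zero_of_isCompact (isCompact_singleton (x := a₁))
      isOpen_interior.isClosed_compl
      (disjoint_compl_right_iff_subset.mpr haC)
  set ψb : ContDiffBump a₂ := ⟨ε/4, ε/2, by positivity, by linarith⟩ with hψb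
  have hzero : ∀ p : Y × (Fin k → ℝ), p.1 ∉ U0 ∨ p.2 ∉ Metric.ball a₂ (ε/2) →
      (φ p.1 : ℂ) * ((ψb p.2 : ℝ) : ℂ) = 0 := by
    rintro p (hp | hp)
    · have : φ p.1 = 0 := hφ0 (fun h => hp (hCU (interior_subset h)))
      simp [this]
    · have : ψb p.2 = 0 := by
        apply ψb.zero_of_le_dist
        simpa [hψb, Metric.mem_ball, not_lt] using hp
      simp [this]
  refine ⟨fun p => (φ p.1 : ℂ) * ((ψb p.2 : ℝ) : ℂ),
    ⟨memC0SmoothFun_mul A φ φ.continuous (fun x => ((ψb x : ℝ) : ℂ))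
        (Complex.ofRealCLM.contDiff.comp ψb.contDiff),
      C ×ˢ Metric.closedBall a₂ (ε/2), hCcomp.prod (isCompact_closedBall _ _),
      ?_, ?_⟩, ?_, hzero⟩
  · refine Subset.trans (prod_mono hCU (Metric.closedBall_subset_ball (by linarith))) hsub
  · intro p _ hp
    rw [mem_prod] at hp
    push_neg at hp
    by_cases h1 : p.1 ∈ C
    · have h2 := hp h1
      refine hzero p (Or.inr fun hb => h2 (Metric.ball_subset_closedBall hb))
    · have : φ p.1 = 0 := hφ0 (fun h => h1 (interior_subset h))
      simp [this]
  · have h1 : φ a₁ = 1 := hφ1 rfl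
    have h2 : ψb a₂ = 1 := ψb.one_of_mem_closedBall (Metric.mem_closedBall_self (by positivity))
    simp [h1, h2]

/-- For `Y` locally compact Hausdorff and `A ⊆ Y × ℝ^k` open, the compactly supported
`C^{0,∞}` functions on `A` separate the points of `A`, and every point of `A` admits a
compactly supported `C^{0,∞}` function taking the value `1` there. -/
theorem ccC0SmoothFun_separatesPoints [LocallyCompactSpace Y] [T2Space Y]
    (k : ℕ) (hk : 1 ≤ k) (A : Set (Y × (Fin k → ℝ))) (hA : IsOpen A) :
    (∀ a ∈ A, ∀ b ∈ A, a ≠ b →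
      ∃ f : Y × (Fin k → ℝ) → ℂ, MemCcC0SmoothFun A f ∧ f a ≠ f b) ∧
    (∀ a ∈ A, ∃ f : Y × (Fin k → ℝ) → ℂ, MemCcC0SmoothFun A f ∧ f a = 1) := by
  -- common: for each `a ∈ A`, a basic product neighborhood inside `A`
  have nbhd : ∀ a ∈ A, ∃ U0 : Set Y, IsOpen U0 ∧ a.1 ∈ U0 ∧ ∃ ε > 0,
      U0 ×ˢ Metric.ball a.2 ε ⊆ A := by
    intro a ha
    obtain ⟨u, hu, v, hv, huv⟩ := mem_nhds_prod_iff.mp (hA.mem_nhds ha)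
    obtain ⟨U0, hU0u, hU0open, ha1⟩ := mem_nhds_iff.mp hu
    obtain ⟨ε, hεpos, hball⟩ := Metric.mem_nhds_iff.mp hv
    exact ⟨U0, hU0open, ha1, ε, hεpos,
      (prod_mono hU0u hball).trans huv⟩
  constructor
  · intro a ha b hb hab
    obtain ⟨U0, hU0, ha1, ε, hεpos, hsub⟩ := nbhd a ha
    by_cases h1 : a.1 = b.1
    · -- same fiber: shrink the radius
      have h2 : a.2 ≠ b.2 := by
        intro h
        exact hab (Prod.ext h1 h)
      have hd : 0 < dist b.2 a.2 := dist_pos.mpr (Ne.symm h2)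
      set ε' : ℝ := min ε (dist b.2 a.2) with hε'
      have hε'pos : 0 < ε' := lt_min hεpos hd
      obtain ⟨f, hf, hfa, hfz⟩ := exists_memCcC0SmoothFun A a.1 a.2 U0 hU0 ha1 ε' hε'pos
        ((prod_mono (subset_refl _) (Metric.ball_subset_ball (min_le_left _ _))).trans hsub)
      refine ⟨f, hf, ?_⟩
      have hfb : f b = 0 := by
        have : b.2 ∉ Metric.ball a.2 (ε'/2) := by
          simp only [Metric.mem_ball, not_lt]
          calc ε'/2 ≤ ε' := by linarith
          _ ≤ dist b.2 a.2 := min_le_right _ _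
        exact Prod.mk.eta (p := b) ▸ hfz b (Or.inr this)
      rw [Prod.mk.eta (p := a)] at hfa
      rw [hfa, hfb]
      exact one_ne_zero
    · -- distinct base points: remove `b.1` from `U0`
      have hU0' : IsOpen (U0 \ {b.1}) := hU0.sdiff isClosed_singleton
      have ha1' : a.1 ∈ U0 \ {b.1} := ⟨ha1, by simpa using h1⟩
      obtain ⟨f, hf, hfa, hfz⟩ := exists_memCcC0SmoothFun A a.1 a.2 (U0 \ {b.1}) hU0' ha1'
        ε hεpos ((prod_mono diff_subset (subset_refl _)).trans hsub)
      refine ⟨f, hf, ?_⟩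
      have hfb : f b = 0 := hfz b (Or.inl (fun h => h.2 rfl))
      rw [Prod.mk.eta (p := a)] at hfa
      rw [hfa, hfb]
      exact one_ne_zero
  · intro a ha
    obtain ⟨U0, hU0, ha1, ε, hεpos, hsub⟩ := nbhd a ha
    obtain ⟨f, hf, hfa, -⟩ := exists_memCcC0SmoothFun A a.1 a.2 U0 hU0 ha1 ε hεpos hsub
    rw [Prod.mk.eta (p := a)] at hfa
    exact ⟨f, hf, hfa⟩
end

section
/- Let Y be a second countable locally compact Hausdorff space, k ≥ 1, and A ⊆ Y × ℝ^k open. Then for every open cover 𝒰 of A there exists a C^{0,∞} partition of unity subordinate to 𝒰: a family of functions f_i ∈ C^{0,∞}(A) with 0 ≤ f_i ≤ 1, whose supports form a locally finite family with each support contained in some member of 𝒰, and with Σ_i f_i(a) = 1 for every a ∈ A. -/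
open Set Topology

variable {Y : Type*} [TopologicalSpace Y]

/-- `f` belongs to the real-valued `C^{0,∞}(A)`: `f : A → ℝ` is continuous, each fiber map
`f^y = f(y, ·)` is smooth on `A^y`, and for every open product set `U ×ˢ V ⊆ A` the map
`y ↦ f^y|_V` is continuous from `U` into `C^∞(V, ℝ)`. -/
def MemC0SmoothFunR {E : Type*} [NormedAddCommGroup E] [NormedSpace ℝ E]
    (A : Set (Y × E)) (f : Y × E → ℝ) : Prop :=
  ContinuousOn f A ∧ (∀ y : Y, ContDiffOn ℝ (⊤ : ℕ∞) (fun x => f (y, x)) {x | (y, x) ∈ A}) ∧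
  ∀ (U : Set Y) (V : Set E), IsOpen U → IsOpen V → U ×ˢ V ⊆ A →
    SmoothConvOn U V (univ : Set ℝ) fun y x => f (y, x)

/-- Functions on `Y × ℝᵏ` that are finite sums of products of a continuous function of `y`
and a smooth function of `x`. -/
def Nice (k : ℕ) (f : Y × (Fin k → ℝ) → ℝ) : Prop :=
  ∃ (n : ℕ) (c : Fin n → Y → ℝ) (ψ : Fin n → (Fin k → ℝ) → ℝ),
    (∀ j, Continuous (c j)) ∧ (∀ j, ContDiff ℝ (⊤ : ℕ∞) (ψ j)) ∧
    ∀ p, f p = ∑ j, c j p.1 * ψ j p.2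

theorem nice_prodMul {φ : Y → ℝ} {ψ : (Fin k → ℝ) → ℝ} (hφ : Continuous φ)
    (hψ : ContDiff ℝ (⊤ : ℕ∞) ψ) : Nice k (fun p => φ p.1 * ψ p.2) :=
  ⟨1, fun _ => φ, fun _ => ψ, fun _ => hφ, fun _ => hψ, fun p => by simp⟩

theorem nice_one : Nice k (fun _ : Y × (Fin k → ℝ) => (1 : ℝ)) := by
  simpa using nice_prodMul (φ := fun _ : Y => (1:ℝ)) continuous_const contDiff_const

theorem Nice.neg {f : Y × (Fin k → ℝ) → ℝ} (hf : Nice k f) : Nice k (fun p => -f p) := by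
  obtain ⟨n, c, ψ, hc, hψ, hf⟩ := hf
  exact ⟨n, fun j => -(c j), ψ, fun j => (hc j).neg, hψ, fun p => by
    simp [hf p, Finset.sum_neg_distrib, neg_mul]⟩

theorem Nice.add {f g : Y × (Fin k → ℝ) → ℝ} (hf : Nice k f) (hg : Nice k g) :
    Nice k (fun p => f p + g p) := by
  obtain ⟨n, c, ψ, hc, hψ, hf⟩ := hf
  obtain ⟨m, d, χ, hd, hχ, hg⟩ := hg
  refine ⟨n + m, Fin.addCases c d, Fin.addCases ψ χ, ?_, ?_, ?_⟩
  · intro j; induction j using Fin.addCases with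
    | left j => simpa using hc j
    | right j => simpa using hd j
  · intro j; induction j using Fin.addCases with
    | left j => simpa using hψ j
    | right j => simpa using hχ j
  · intro p
    show f p + g p = _
    rw [hf p, hg p, Fin.sum_univ_add]
    simp

theorem Nice.sub {f g : Y × (Fin k → ℝ) → ℝ} (hf : Nice k f) (hg : Nice k g) :
    Nice k (fun p => f p - g p) := by
  simpa [sub_eq_add_neg] using hf.add hg.neg

theorem Nice.mul {f g : Y × (Fin k → ℝ) → ℝ} (hf : Nice k f) (hg : Nice k g) :
    Nice k (fun p => f p * g p) := by
  obtain ⟨n, c, ψ, hc, hψ, hf⟩ := hf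
  obtain ⟨m, d, χ, hd, hχ, hg⟩ := hg
  refine ⟨n * m,
    fun j => c (finProdFinEquiv.symm j).1 * d (finProdFinEquiv.symm j).2,
    fun j => ψ (finProdFinEquiv.symm j).1 * χ (finProdFinEquiv.symm j).2,
    fun j => (hc _).mul (hd _), fun j => (hψ _).mul (hχ _), fun p => ?_⟩
  show f p * g p = _
  rw [hf p, hg p, Finset.sum_mul_sum,
    ← Fintype.sum_prod_type (f := fun q : Fin n × Fin m => c q.1 p.1 * ψ q.1 p.2 * (d q.2 p.1 * χ q.2 p.2))]
  refine Fintype.sum_equiv finProdFinEquiv _ _ fun q => ?_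
  simp only [Equiv.symm_apply_apply, Pi.mul_apply]
  ring

theorem key_iteratedFDeriv {n m : ℕ} (c : Fin m → ℝ) (ψ : Fin m → (Fin k → ℝ) → ℝ)
    (hψ : ∀ j, ContDiff ℝ (⊤ : ℕ∞) (ψ j)) (x : Fin k → ℝ) :
    iteratedFDeriv ℝ n (fun x => ∑ j, c j * ψ j x) x
      = ∑ j, c j • iteratedFDeriv ℝ n (ψ j) x := by
  have main : ∀ s : Finset (Fin m),
      iteratedFDeriv ℝ n (fun x => ∑ j ∈ s, c j * ψ j x) x
        = ∑ j ∈ s, c j • iteratedFDeriv ℝ n (ψ j) x := by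
    intro s
    induction s using Finset.cons_induction with
    | empty => simp [iteratedFDeriv_zero_fun]
    | cons a s ha IH =>
      have h1 : (fun x => ∑ j ∈ Finset.cons a s ha, c j * ψ j x)
          = fun x => (c a * ψ a x) + ∑ j ∈ s, c j * ψ j x := by
        funext x; rw [Finset.sum_cons]
      have hca : ContDiff ℝ (n : ℕ∞) fun x => c a * ψ a x :=
        contDiff_const.mul ((hψ a).of_le (mod_cast le_top))
      have hsum : ContDiff ℝ (n : ℕ∞) fun x => ∑ j ∈ s, c j * ψ j x :=
        ContDiff.sum fun j _ => contDiff_const.mul ((hψ j).of_le (mod_cast le_top))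
      rw [h1, iteratedFDeriv_add_apply' hca.contDiffAt hsum.contDiffAt, IH, Finset.sum_cons]
      congr 1
      have h2 : (fun x => c a * ψ a x) = fun x => c a • ψ a x := by
        funext x; rw [smul_eq_mul]
      rw [h2]
      exact iteratedFDeriv_const_smul_apply' ((hψ a).contDiffAt.of_le (mod_cast le_top))
  exact main Finset.univ

theorem Nice.memC0SmoothFunR {A : Set (Y × (Fin k → ℝ))} {f : Y × (Fin k → ℝ) → ℝ}
    (hf : Nice k f) : MemC0SmoothFunR A f := by
  obtain ⟨m, c, ψ, hc, hψ, hfe⟩ := hf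
  have hcont : Continuous f := by
    have hrw : f = fun p => ∑ j, c j p.1 * ψ j p.2 := funext hfe
    rw [hrw]
    exact continuous_finset_sum _ fun j _ =>
      ((hc j).comp continuous_fst).mul ((hψ j).continuous.comp continuous_snd)
  have hfib : ∀ y, ContDiff ℝ (⊤ : ℕ∞) (fun x => f (y, x)) := by
    intro y
    have hrw : (fun x => f (y, x)) = fun x => ∑ j, c j y * ψ j x :=
      funext fun x => hfe (y, x)
    rw [hrw]
    exact ContDiff.sum fun j _ => contDiff_const.mul (hψ j)
  refine ⟨hcont.continuousOn, fun y => (hfib y).contDiffOn, ?_⟩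
  intro U V hU hV hUV
  refine ⟨fun y _ => ⟨(hfib y).contDiffOn, mapsTo_univ _ _⟩, ?_⟩
  intro y₀ hy₀ K hKV hK n ε hε
  have hDcont : ∀ j, Continuous (iteratedFDeriv ℝ n (ψ j)) := fun j =>
    (hψ j).continuous_iteratedFDeriv (mod_cast le_top)
  have hMj : ∀ j, ∃ M : ℝ, 0 < M ∧ ∀ x ∈ K, ‖iteratedFDeriv ℝ n (ψ j) x‖ ≤ M := by
    intro j
    obtain ⟨M, hM⟩ := hK.exists_bound_of_continuousOn (hDcont j).continuousOn
    exact ⟨max M 0 + 1, by positivity,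
      fun x hx => (hM x hx).trans (by nlinarith [le_max_left M 0])⟩
  choose M hMpos hM using hMj
  have hev : ∀ j, ∀ᶠ y in 𝓝 y₀, |c j y - c j y₀| < ε / (m + 1) / M j := by
    intro j
    have hδ : 0 < ε / (m + 1) / M j := div_pos (div_pos hε (by positivity)) (hMpos j)
    have := Metric.tendsto_nhds.mp ((hc j).tendsto y₀) _ hδ
    simpa [Real.dist_eq] using this
  have hall : ∀ᶠ y in 𝓝 y₀, ∀ j, |c j y - c j y₀| < ε / (m + 1) / M j :=
    Filter.eventually_all.mpr hev
  filter_upwards [hall.filter_mono nhdsWithin_le_nhds] with y hy x hx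
  have hxV : x ∈ V := hKV hx
  have diff_eq : ∀ y' : Y, iteratedFDerivWithin ℝ n ((fun y x => f (y, x)) y') V x
      = ∑ j, c j y' • iteratedFDeriv ℝ n (ψ j) x := by
    intro y'
    have hrw : ((fun y x => f (y, x)) y') = fun x => ∑ j, c j y' * ψ j x :=
      funext fun x => hfe (y', x)
    rw [hrw, iteratedFDerivWithin_of_isOpen n hV hxV, key_iteratedFDeriv _ _ hψ]
  rw [diff_eq y, diff_eq y₀, ← Finset.sum_sub_distrib]
  have hterm : ∀ j : Fin m,
      ‖c j y • iteratedFDeriv ℝ n (ψ j) x - c j y₀ • iteratedFDeriv ℝ n (ψ j) x‖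
        ≤ ε / (m + 1) := by
    intro j
    rw [← sub_smul, norm_smul, Real.norm_eq_abs]
    calc |c j y - c j y₀| * ‖iteratedFDeriv ℝ n (ψ j) x‖
        ≤ |c j y - c j y₀| * M j :=
          mul_le_mul_of_nonneg_left (hM j x hx) (abs_nonneg _)
      _ ≤ (ε / (m + 1) / M j) * M j :=
          mul_le_mul_of_nonneg_right (hy j).le (hMpos j).le
      _ = ε / (m + 1) := div_mul_cancel₀ _ (hMpos j).ne'
  calc ‖∑ j, (c j y • iteratedFDeriv ℝ n (ψ j) x - c j y₀ • iteratedFDeriv ℝ n (ψ j) x)‖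
      ≤ ∑ j, ‖c j y • iteratedFDeriv ℝ n (ψ j) x - c j y₀ • iteratedFDeriv ℝ n (ψ j) x‖ :=
        norm_sum_le _ _
    _ ≤ ∑ _j : Fin m, ε / (m + 1) := Finset.sum_le_sum fun j _ => hterm j
    _ = m * (ε / (m + 1)) := by simp [Finset.sum_const, nsmul_eq_mul]
    _ < ε := by
        rw [mul_div_assoc', div_lt_iff₀ (by positivity : (0:ℝ) < (m:ℝ) + 1)]
        nlinarith

/-- For `Y` a second countable locally compact Hausdorff space and `A ⊆ Y × ℝ^k` open,
every open cover `𝒰` of `A` admits a subordinate `C^{0,∞}` partition of unity: a family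
`f i ∈ C^{0,∞}(A)` with `0 ≤ f i ≤ 1`, whose supports (closed supports relative to `A`)
form a locally finite family, each contained in some member of `𝒰`, and with
`∑ᶠ i, f i a = 1` for every `a ∈ A`. -/
theorem exists_c0Smooth_partitionOfUnity [LocallyCompactSpace Y] [T2Space Y]
    [SecondCountableTopology Y] (k : ℕ) (hk : 1 ≤ k)
    (A : Set (Y × (Fin k → ℝ))) (hA : IsOpen A)
    (𝒰 : Set (Set (Y × (Fin k → ℝ)))) (h𝒰 : ∀ u ∈ 𝒰, IsOpen u) (hcov : A ⊆ ⋃₀ 𝒰) :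
    ∃ (ι : Type) (f : ι → Y × (Fin k → ℝ) → ℝ),
      (∀ i, MemC0SmoothFunR A (f i)) ∧
      (∀ i, ∀ p ∈ A, f i p ∈ Icc (0 : ℝ) 1) ∧
      (∀ a ∈ A, ∃ U ∈ 𝓝 a,
        {i | (U ∩ (closure {p ∈ A | f i p ≠ 0} ∩ A)).Nonempty}.Finite) ∧
      (∀ i, ∃ u ∈ 𝒰, closure {p ∈ A | f i p ≠ 0} ∩ A ⊆ u) ∧
      (∀ a ∈ A, ∑ᶠ i, f i a = 1) := by
  classical
  rcases A.eq_empty_or_nonempty with hAe | ⟨a₀, ha₀⟩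
  · subst hAe
    exact ⟨Empty, fun i _ => 0, fun i => i.elim, fun i => i.elim,
      by simp, fun i => i.elim, by simp⟩
  letI : MetricSpace Y := TopologicalSpace.metrizableSpaceMetric Y
  have hsel : ∀ a : A, ∃ (u : Set (Y × (Fin k → ℝ))) (r : ℝ), u ∈ 𝒰 ∧ 0 < r ∧
      Metric.closedBall (a : Y × (Fin k → ℝ)) r ⊆ u ∩ A := by
    rintro ⟨a, ha⟩
    obtain ⟨u, hu𝒰, hau⟩ := hcov ha
    have hopen : IsOpen (u ∩ A) := (h𝒰 u hu𝒰).inter hA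
    obtain ⟨ε, hε, hball⟩ := Metric.isOpen_iff.mp hopen a ⟨hau, ha⟩
    refine ⟨u, ε / 2, hu𝒰, by positivity, fun p hp => hball ?_⟩
    have := Metric.mem_closedBall.mp hp
    exact Metric.mem_ball.mpr (lt_of_le_of_lt this (by linarith))
  choose u r hu𝒰' hrpos hball using hsel
  set W : A → Set (Y × (Fin k → ℝ)) :=
    fun a => Metric.ball (a : Y × (Fin k → ℝ)) (r a / 2) with hW
  have hWopen : ∀ a, IsOpen (W a) := fun a => Metric.isOpen_ball
  have hAcov : A ⊆ ⋃ a : A, W a := fun p hp =>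
    Set.mem_iUnion.mpr ⟨⟨p, hp⟩, Metric.mem_ball_self (by have := hrpos ⟨p, hp⟩; positivity)⟩
  obtain ⟨T, hTc, hTU⟩ := TopologicalSpace.isOpen_iUnion_countable W hWopen
  have hTne : T.Nonempty := by
    have h1 : (a₀ : Y × (Fin k → ℝ)) ∈ ⋃ a ∈ T, W a := by
      rw [hTU]; exact hAcov ha₀
    obtain ⟨a, haT, -⟩ := Set.mem_iUnion₂.mp h1
    exact ⟨a, haT⟩
  obtain ⟨e, hTe⟩ := hTc.exists_eq_range hTne
  have hcove : A ⊆ ⋃ i : ℕ, W (e i) := by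
    intro p hp
    have h1 : p ∈ ⋃ a ∈ T, W a := by rw [hTU]; exact hAcov hp
    obtain ⟨a, haT, hpa⟩ := Set.mem_iUnion₂.mp h1
    rw [hTe] at haT
    obtain ⟨i, hi⟩ := haT
    exact Set.mem_iUnion.mpr ⟨i, by rw [hi]; exact hpa⟩
  set yc : ℕ → Y := fun i => (e i : Y × (Fin k → ℝ)).1 with hyc
  set xc : ℕ → (Fin k → ℝ) := fun i => (e i : Y × (Fin k → ℝ)).2 with hxc
  set rr : ℕ → ℝ := fun i => r (e i) with hrr'
  have hrr : ∀ i, 0 < rr i := fun i => hrpos (e i)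
  set ψ : (i : ℕ) → ContDiffBump (xc i) :=
    fun i => ⟨rr i / 2, rr i, by have := hrr i; positivity, by linarith [hrr i]⟩ with hψdef
  set φ : ℕ → Y → ℝ := fun i y => max 0 (min 1 (2 - (2 / rr i) * dist y (yc i))) with hφdef
  set fb : ℕ → Y × (Fin k → ℝ) → ℝ := fun i p => φ i p.1 * (ψ i) p.2 with hfbdef
  set g : ℕ → Y × (Fin k → ℝ) → ℝ :=
    fun i p => fb i p * ∏ m ∈ Finset.range i, (1 - fb m p) with hgdef
  -- facts about φ
  have hφcont : ∀ i, Continuous (φ i) := by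
    intro i
    have h1 : Continuous fun y : Y => dist y (yc i) := continuous_id.dist continuous_const
    exact continuous_const.max (continuous_const.min
      (continuous_const.sub (continuous_const.mul h1)))
  have hφ01 : ∀ i y, φ i y ∈ Icc (0 : ℝ) 1 := fun i y =>
    ⟨le_max_left _ _, max_le (by norm_num) (min_le_left _ _)⟩
  have hφone : ∀ i y, dist y (yc i) ≤ rr i / 2 → φ i y = 1 := by
    intro i y hy
    have h2 : (2 / rr i) * dist y (yc i) ≤ 1 := by
      rw [div_mul_eq_mul_div, div_le_one (hrr i)]
      linarith
    have h3 : (1 : ℝ) ≤ 2 - (2 / rr i) * dist y (yc i) := by linarith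
    show max 0 (min 1 (2 - (2 / rr i) * dist y (yc i))) = 1
    rw [min_eq_left h3, max_eq_right (by norm_num : (0:ℝ) ≤ 1)]
  have hφsupp : ∀ i y, φ i y ≠ 0 → dist y (yc i) < rr i := by
    intro i y h
    by_contra hge
    push_neg at hge
    apply h
    have h2 : (2 : ℝ) ≤ (2 / rr i) * dist y (yc i) := by
      rw [div_mul_eq_mul_div, le_div_iff₀ (hrr i)]
      linarith
    have h3 : 2 - (2 / rr i) * dist y (yc i) ≤ 0 := by linarith
    show max 0 (min 1 (2 - (2 / rr i) * dist y (yc i))) = 0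
    exact max_eq_left ((min_le_right _ _).trans h3)
  -- facts about fb
  have hfb01 : ∀ i p, fb i p ∈ Icc (0 : ℝ) 1 := fun i p =>
    ⟨mul_nonneg (hφ01 i p.1).1 (ψ i).nonneg,
     mul_le_one₀ (hφ01 i p.1).2 (ψ i).nonneg (ψ i).le_one⟩
  have hfbone : ∀ i p, p ∈ W (e i) → fb i p = 1 := by
    intro i p hp
    have hd := Metric.mem_ball.mp hp
    rw [Prod.dist_eq] at hd
    have h1 : dist p.1 (yc i) ≤ rr i / 2 := le_of_lt (lt_of_le_of_lt (le_max_left _ _) hd)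
    have h2 : dist p.2 (xc i) ≤ rr i / 2 := le_of_lt (lt_of_le_of_lt (le_max_right _ _) hd)
    show φ i p.1 * (ψ i) p.2 = 1
    rw [hφone i p.1 h1, (ψ i).one_of_mem_closedBall (Metric.mem_closedBall.mpr h2), mul_one]
  have hfbsupp : ∀ i p, fb i p ≠ 0 → p ∈ Metric.ball ((e i : Y × (Fin k → ℝ))) (rr i) := by
    intro i p h
    have hφne : φ i p.1 ≠ 0 := by
      intro h0
      exact h (by show φ i p.1 * (ψ i) p.2 = 0; rw [h0, zero_mul])
    have hψne : (ψ i) p.2 ≠ 0 := by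
      intro h0
      exact h (by show φ i p.1 * (ψ i) p.2 = 0; rw [h0, mul_zero])
    have h1 := hφsupp i p.1 hφne
    have h2 : p.2 ∈ Metric.ball (xc i) (rr i) := by
      have := Function.mem_support.mpr hψne
      rwa [(ψ i).support_eq] at this
    rw [Metric.mem_ball, Prod.dist_eq]
    exact max_lt h1 (Metric.mem_ball.mp h2)
  have hnfb : ∀ i, Nice k (fb i) := fun i => nice_prodMul (hφcont i) (ψ i).contDiff
  -- facts about g
  have hg01 : ∀ i p, g i p ∈ Icc (0 : ℝ) 1 := by
    intro i p
    have hnn : ∀ m ∈ Finset.range i, (0:ℝ) ≤ 1 - fb m p := fun m _ => by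
      linarith [(hfb01 m p).2]
    constructor
    · exact mul_nonneg (hfb01 i p).1 (Finset.prod_nonneg hnn)
    · exact mul_le_one₀ (hfb01 i p).2 (Finset.prod_nonneg hnn)
        (Finset.prod_le_one hnn fun m _ => by linarith [(hfb01 m p).1])
  have hprodnice : ∀ n, Nice k (fun p => ∏ m ∈ Finset.range n, (1 - fb m p)) := by
    intro n
    induction n with
    | zero => simpa using (nice_one (Y := Y) (k := k))
    | succ n ih =>
      have h2 := ih.mul ((nice_one (Y := Y) (k := k)).sub (hnfb n))
      simpa [Finset.prod_range_succ] using h2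
  have hng : ∀ i, Nice k (g i) := fun i => (hnfb i).mul (hprodnice i)
  have htel : ∀ (n : ℕ) (p : Y × (Fin k → ℝ)), ∑ i ∈ Finset.range (n + 1), g i p
      = 1 - ∏ m ∈ Finset.range (n + 1), (1 - fb m p) := by
    intro n p
    induction n with
    | zero => simp [hgdef]
    | succ n ih =>
      rw [Finset.sum_range_succ, ih]
      have hp1 : ∏ m ∈ Finset.range (n + 1 + 1), (1 - fb m p)
          = (∏ m ∈ Finset.range (n + 1), (1 - fb m p)) * (1 - fb (n + 1) p) :=
        Finset.prod_range_succ _ _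
      rw [hp1]
      show 1 - (∏ m ∈ Finset.range (n + 1), (1 - fb m p))
          + fb (n + 1) p * ∏ m ∈ Finset.range (n + 1), (1 - fb m p) = _
      ring
  have hvanish : ∀ i n, n < i → ∀ p ∈ W (e n), g i p = 0 := by
    intro i n hni p hp
    show fb i p * ∏ m ∈ Finset.range i, (1 - fb m p) = 0
    rw [Finset.prod_eq_zero (Finset.mem_range.mpr hni) (by rw [hfbone n p hp]; ring), mul_zero]
  refine ⟨ℕ, g, fun i => (hng i).memC0SmoothFunR, fun i p _ => hg01 i p, ?_, ?_, ?_⟩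
  · -- local finiteness
    intro a ha
    obtain ⟨n, hn⟩ := Set.mem_iUnion.mp (hcove ha)
    refine ⟨W (e n), (hWopen (e n)).mem_nhds hn, (Set.finite_Iic n).subset ?_⟩
    intro i hi
    simp only [Set.mem_setOf_eq] at hi
    rw [Set.mem_Iic]
    by_contra hgt
    push_neg at hgt
    obtain ⟨q, hqW, hqcl, -⟩ := hi
    have hsub : {p | p ∈ A ∧ g i p ≠ 0} ⊆ (W (e n))ᶜ := by
      intro p hp hpW
      exact hp.2 (hvanish i n hgt p hpW)
    exact closure_minimal hsub (hWopen (e n)).isClosed_compl hqcl hqW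
  · -- subordination
    intro i
    refine ⟨u (e i), hu𝒰' (e i), ?_⟩
    have hsub : {p | p ∈ A ∧ g i p ≠ 0} ⊆ Metric.ball ((e i : Y × (Fin k → ℝ))) (rr i) := by
      intro p hp
      refine hfbsupp i p fun h0 => hp.2 ?_
      show fb i p * ∏ m ∈ Finset.range i, (1 - fb m p) = 0
      rw [h0, zero_mul]
    have hcl : closure {p | p ∈ A ∧ g i p ≠ 0}
        ⊆ Metric.closedBall ((e i : Y × (Fin k → ℝ))) (rr i) :=
      (closure_mono hsub).trans Metric.closure_ball_subset_closedBall
    intro p hp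
    exact (hball (e i) (hcl hp.1)).1
  · -- sum equals one
    intro a ha
    obtain ⟨n, hn⟩ := Set.mem_iUnion.mp (hcove ha)
    have hsupp : (Function.support fun i => g i a) ⊆ ↑(Finset.range (n + 1)) := by
      intro i hi
      simp only [Finset.coe_range, Set.mem_Iio]
      by_contra h
      push_neg at h
      exact hi (hvanish i n (by omega) a hn)
    rw [finsum_eq_sum_of_support_subset _ hsupp, htel n a,
      Finset.prod_eq_zero (Finset.self_mem_range_succ n) (by rw [hfbone n a hn]; ring), sub_zero]
end
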